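/- The 3-dimensional representation ζ₃ of the braid group B₃ is simple: every K-linear subspace V of K³ satisfying R₃·v ∈ V and Q₃·v ∈ V for all v ∈ V is either the zero subspace or all of K³. -/
import Mathlib

set_option maxHeartbeats 4000000
set_option synthInstance.maxHeartbeats 2000000

noncomputable section

/-- The variable `W` of the field `K = ℂ(W)` of rational functions over `ℂ`. -/
def W : RatFunc ℂ := RatFunc.X

/-- `R₃`: the 3×3 block of the image of the elementary braid `σ₁` of `B₃` under the
invariant `Z_spin7` obtained from the universal Vassiliev–Kontsevich invariant composed
with the weight system of the spinor representation of `so₇`. -/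
def R3 : Matrix (Fin 3) (Fin 3) (RatFunc ℂ) :=
  !![-W, -W ^ (-11 : ℤ) * (W ^ 20 - 1), -W ^ 9;
     0, -W ^ 9, -W ^ 9;
     0, 0, W ^ (-3 : ℤ)]

/-- `Q₃`: the 3×3 block of the image of the elementary braid `σ₂` of `B₃` under
`Z_spin7`. -/
def Q3 : Matrix (Fin 3) (Fin 3) (RatFunc ℂ) :=
  !![W ^ (-3 : ℤ), 0, 0;
     W ^ 9, -W ^ 9, 0;
     -W ^ 9, W ^ (-11 : ℤ) * (W ^ 20 - 1), -W]

/- ### Auxiliary material -/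

lemma hW : W ≠ 0 := RatFunc.X_ne_zero

lemma z3 : W ^ (-3 : ℤ) = (W^3)⁻¹ := by rw [zpow_neg, zpow_ofNat]
lemma z11 : W ^ (-11 : ℤ) = (W^11)⁻¹ := by rw [zpow_neg, zpow_ofNat]

lemma i3 : W^3 * (W^3)⁻¹ = 1 := mul_inv_cancel₀ (pow_ne_zero _ hW)
lemma i11 : W^11 * (W^11)⁻¹ = 1 := mul_inv_cancel₀ (pow_ne_zero _ hW)
lemma i20 : W^20 * (W^20)⁻¹ = 1 := mul_inv_cancel₀ (pow_ne_zero _ hW)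
lemma i28 : W^28 * (W^28)⁻¹ = 1 := mul_inv_cancel₀ (pow_ne_zero _ hW)

/-- standard basis vectors -/
def ee0 : Fin 3 → RatFunc ℂ := ![1, 0, 0]
def ee1 : Fin 3 → RatFunc ℂ := ![0, 1, 0]
def ee2 : Fin 3 → RatFunc ℂ := ![0, 0, 1]

/-- eta expansion for vectors of length 3 -/
lemma eta3 (u : Fin 3 → RatFunc ℂ) : u = ![u 0, u 1, u 2] := by
  funext i
  fin_cases i <;> rfl

/-- Row functionals: `f0` is the top row of `W^22·(R₃+W⁹)(R₃−W⁻³)` (a rank-one matrix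
projecting onto the first coordinate), and `f1 u = f0 (W^11·Q₃ u)`, `f2 u = f1 (W^11·Q₃ u)`. -/
def f0 (u : Fin 3 → RatFunc ℂ) : RatFunc ℂ :=
  (W^20 + W^24 - W^28 - W^32) * u 0 + (-W^8 - W^12 + W^28 + W^32) * u 1 + (-W^20 + W^32) * u 2

def f1 (u : Fin 3 → RatFunc ℂ) : RatFunc ℂ :=
  (-W^36 + W^48) * u 0 + (W^20 + W^28 - W^40 - W^48) * u 1 + (W^32 - W^44) * u 2

def f2 (u : Fin 3 → RatFunc ℂ) : RatFunc ℂ :=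
  (W^40 - W^44 + W^48 - W^52 + W^56 - W^60 + W^64 - W^68) * u 0 +
  (-W^32 - W^40 + W^44 - W^48 + W^52 + W^60 - W^64 + W^68) * u 1 + (-W^44 + W^56) * u 2

/-- Polynomial form of `W^11 • R₃`. -/
lemma hA (u : Fin 3 → RatFunc ℂ) : W^11 • R3.mulVec u
    = ![-W^12 * u 0 + (1 - W^20) * u 1 - W^20 * u 2,
        -W^20 * u 1 - W^20 * u 2,
        W^8 * u 2] := by
  funext i
  fin_cases i
  · show (W^11 • R3.mulVec u) 0 = -W^12 * u 0 + (1 - W^20) * u 1 - W^20 * u 2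
    simp only [R3, z3, z11, Matrix.mulVec, dotProduct, Fin.sum_univ_three,
      Pi.smul_apply, smul_eq_mul, Matrix.cons_val', Matrix.cons_val_zero, Matrix.cons_val_one,
      Matrix.head_cons, Matrix.head_fin_const, Matrix.empty_val', Matrix.cons_val_fin_one,
      Matrix.cons_val_two, Matrix.tail_cons, Matrix.of_apply]
    linear_combination (-(W^20 - 1) * u 1) * i11
  · show (W^11 • R3.mulVec u) 1 = -W^20 * u 1 - W^20 * u 2
    simp only [R3, z3, z11, Matrix.mulVec, dotProduct, Fin.sum_univ_three,
      Pi.smul_apply, smul_eq_mul, Matrix.cons_val', Matrix.cons_val_zero, Matrix.cons_val_one,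
      Matrix.head_cons, Matrix.head_fin_const, Matrix.empty_val', Matrix.cons_val_fin_one,
      Matrix.cons_val_two, Matrix.tail_cons, Matrix.of_apply]
    ring
  · show (W^11 • R3.mulVec u) 2 = W^8 * u 2
    simp only [R3, z3, z11, Matrix.mulVec, dotProduct, Fin.sum_univ_three,
      Pi.smul_apply, smul_eq_mul, Matrix.cons_val', Matrix.cons_val_zero, Matrix.cons_val_one,
      Matrix.head_cons, Matrix.head_fin_const, Matrix.empty_val', Matrix.cons_val_fin_one,
      Matrix.cons_val_two, Matrix.tail_cons, Matrix.of_apply]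
    linear_combination (W^8 * u 2) * i3

/-- Polynomial form of `W^11 • Q₃`. -/
lemma hB (u : Fin 3 → RatFunc ℂ) : W^11 • Q3.mulVec u
    = ![W^8 * u 0,
        W^20 * u 0 - W^20 * u 1,
        -W^20 * u 0 + (-1 + W^20) * u 1 - W^12 * u 2] := by
  funext i
  fin_cases i
  · show (W^11 • Q3.mulVec u) 0 = W^8 * u 0
    simp only [Q3, z3, z11, Matrix.mulVec, dotProduct, Fin.sum_univ_three,
      Pi.smul_apply, smul_eq_mul, Matrix.cons_val', Matrix.cons_val_zero, Matrix.cons_val_one,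
      Matrix.head_cons, Matrix.head_fin_const, Matrix.empty_val', Matrix.cons_val_fin_one,
      Matrix.cons_val_two, Matrix.tail_cons, Matrix.of_apply]
    linear_combination (W^8 * u 0) * i3
  · show (W^11 • Q3.mulVec u) 1 = W^20 * u 0 - W^20 * u 1
    simp only [Q3, z3, z11, Matrix.mulVec, dotProduct, Fin.sum_univ_three,
      Pi.smul_apply, smul_eq_mul, Matrix.cons_val', Matrix.cons_val_zero, Matrix.cons_val_one,
      Matrix.head_cons, Matrix.head_fin_const, Matrix.empty_val', Matrix.cons_val_fin_one,
      Matrix.cons_val_two, Matrix.tail_cons, Matrix.of_apply]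
    ring
  · show (W^11 • Q3.mulVec u) 2 = -W^20 * u 0 + (-1 + W^20) * u 1 - W^12 * u 2
    simp only [Q3, z3, z11, Matrix.mulVec, dotProduct, Fin.sum_univ_three,
      Pi.smul_apply, smul_eq_mul, Matrix.cons_val', Matrix.cons_val_zero, Matrix.cons_val_one,
      Matrix.head_cons, Matrix.head_fin_const, Matrix.empty_val', Matrix.cons_val_fin_one,
      Matrix.cons_val_two, Matrix.tail_cons, Matrix.of_apply]
    linear_combination ((W^20 - 1) * u 1) * i11

lemma poly_ne_zero (p : Polynomial ℂ) (hp : Polynomial.eval 2 p ≠ 0) :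
    algebraMap (Polynomial ℂ) (RatFunc ℂ) p ≠ 0 := by
  apply RatFunc.algebraMap_ne_zero
  intro h
  apply hp
  rw [h, Polynomial.eval_zero]

/-- the determinant of the matrix with rows `f0, f1, f2` is nonzero -/
lemma det_ne_zero :
    (-W^84 + 2*W^88 - W^92 + W^96 - 3*W^100 + 4*W^104 - 3*W^108 + 2*W^112 - 3*W^116 + 4*W^120
      - 3*W^124 + W^128 - W^132 + 2*W^136 - W^140 : RatFunc ℂ) ≠ 0 := by
  have h : (-W^84 + 2*W^88 - W^92 + W^96 - 3*W^100 + 4*W^104 - 3*W^108 + 2*W^112 - 3*W^116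
      + 4*W^120 - 3*W^124 + W^128 - W^132 + 2*W^136 - W^140 : RatFunc ℂ)
      = algebraMap (Polynomial ℂ) (RatFunc ℂ)
        (-Polynomial.X^84 + 2*Polynomial.X^88 - Polynomial.X^92 + Polynomial.X^96
          - 3*Polynomial.X^100 + 4*Polynomial.X^104 - 3*Polynomial.X^108 + 2*Polynomial.X^112
          - 3*Polynomial.X^116 + 4*Polynomial.X^120 - 3*Polynomial.X^124 + Polynomial.X^128
          - Polynomial.X^132 + 2*Polynomial.X^136 - Polynomial.X^140) := by
    simp only [map_add, map_sub, map_neg, map_mul, map_pow, map_ofNat,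
      RatFunc.algebraMap_X, W]
  rw [h]
  apply poly_ne_zero
  simp only [Polynomial.eval_add, Polynomial.eval_sub, Polynomial.eval_neg,
    Polynomial.eval_mul, Polynomial.eval_pow, Polynomial.eval_ofNat, Polynomial.eval_X]
  norm_num

/-- The 3-dimensional representation `ζ₃` of the braid group `B₃` is simple: every
`K`-linear subspace of `K³` invariant under `R₃` and `Q₃` is `⊥` or `⊤`. -/
theorem Zspin7_zeta3_simple :
    ∀ V : Submodule (RatFunc ℂ) (Fin 3 → RatFunc ℂ),
      (∀ v ∈ V, R3.mulVec v ∈ V) → (∀ v ∈ V, Q3.mulVec v ∈ V) →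
      V = ⊥ ∨ V = ⊤ := by
  intro V hR hQ
  by_cases hbot : V = ⊥
  · exact Or.inl hbot
  right
  obtain ⟨v, hv, hv0⟩ := (Submodule.ne_bot_iff V).mp hbot
  -- the projection onto the first basis vector
  have hproj : ∀ u ∈ V, f0 u • ee0 ∈ V := by
    intro u hu
    have h1 : (W^11 • R3.mulVec u) ∈ V := V.smul_mem _ (hR u hu)
    have h2 : (W^11 • R3.mulVec (W^11 • R3.mulVec u)) ∈ V := V.smul_mem _ (hR _ h1)
    have key : f0 u • ee0
        = W^11 • R3.mulVec (W^11 • R3.mulVec u) + (W^20 - W^8) • (W^11 • R3.mulVec u)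
          - W^28 • u := by
      rw [eta3 u, hA, hA]
      funext i
      fin_cases i
      · show _ = _
        simp [f0, ee0]
        ring
      · show _ = _
        simp [f0, ee0]
        ring
      · show _ = _
        simp [f0, ee0]
        ring
    rw [key]
    exact V.sub_mem (V.add_mem h2 (V.smul_mem _ h1)) (V.smul_mem _ hu)
  have hBmem : ∀ u ∈ V, (W^11 • Q3.mulVec u) ∈ V := fun u hu => V.smul_mem _ (hQ u hu)
  have step1 : ∀ u : Fin 3 → RatFunc ℂ, f0 (W^11 • Q3.mulVec u) = f1 u := by
    intro u
    rw [hB u]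
    simp [f0, f1]
    ring
  have step2 : ∀ u : Fin 3 → RatFunc ℂ, f1 (W^11 • Q3.mulVec u) = f2 u := by
    intro u
    rw [hB u]
    simp [f1, f2]
    ring
  have m0 : f0 v • ee0 ∈ V := hproj v hv
  have m1 : f1 v • ee0 ∈ V := by
    have := hproj _ (hBmem v hv); rwa [step1 v] at this
  have m2 : f2 v • ee0 ∈ V := by
    have := hproj _ (hBmem _ (hBmem v hv)); rwa [step1 _, step2 v] at this
  -- e₀ lies in V
  have he0 : ee0 ∈ V := by
    have key : ∀ s : RatFunc ℂ, s ≠ 0 → s • ee0 ∈ V → ee0 ∈ V := by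
      intro s hs hmem
      have := V.smul_mem s⁻¹ hmem
      rwa [smul_smul, inv_mul_cancel₀ hs, one_smul] at this
    by_cases c0 : f0 v = 0
    · by_cases c1 : f1 v = 0
      · by_cases c2 : f2 v = 0
        · -- contradiction: v would be 0
          exfalso
          apply hv0
          simp only [f0] at c0
          simp only [f1] at c1
          simp only [f2] at c2
          have hd := det_ne_zero
          have e0 : (-W^84 + 2*W^88 - W^92 + W^96 - 3*W^100 + 4*W^104 - 3*W^108 + 2*W^112
              - 3*W^116 + 4*W^120 - 3*W^124 + W^128 - W^132 + 2*W^136 - W^140) * v 0 = 0 := by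
            linear_combination
              (-W^76 + W^80 + W^88 - W^92 + W^96 - W^100 - W^108 + W^112) * c0
              + (-W^56 + W^60 - W^64 + 2*W^68 - W^72 + 2*W^76 - 2*W^80 + W^84 - 2*W^88 + W^92
                  - W^96 + W^100) * c1
              + (-W^44 + W^48 + W^56 - W^60 + W^64 - W^68 - W^76 + W^80) * c2
          have e1 : (-W^84 + 2*W^88 - W^92 + W^96 - 3*W^100 + 4*W^104 - 3*W^108 + 2*W^112
              - 3*W^116 + 4*W^120 - 3*W^124 + W^128 - W^132 + 2*W^136 - W^140) * v 1 = 0 := by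
            linear_combination
              (W^72 - W^76 - 2*W^84 + 2*W^88 + 2*W^96 - 2*W^100 - W^108 + W^112) * c0
              + (W^60 - 2*W^64 - W^72 + 4*W^76 - W^80 + W^84 - 3*W^88 + W^92 - W^96 + W^100) * c1
              + (-W^52 + W^60 + 2*W^64 - W^68 - W^72 - W^76 + W^80) * c2
          have e2 : (-W^84 + 2*W^88 - W^92 + W^96 - 3*W^100 + 4*W^104 - 3*W^108 + 2*W^112
              - 3*W^116 + 4*W^120 - 3*W^124 + W^128 - W^132 + 2*W^136 - W^140) * v 2 = 0 := by
            linear_combination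
              (-W^60 + W^64 - W^68 + 2*W^72 - W^76 + W^80 - 2*W^84 + 2*W^88 - 2*W^92 + W^96
                  + W^104 - W^108) * c0
              + (-W^48 + W^52 + W^56 - W^64 - W^76 + W^84 + W^88 - W^92) * c1
              + (W^40 - W^48 - W^60 + W^68) * c2
          have hv00 : v 0 = 0 := (mul_eq_zero.mp e0).resolve_left hd
          have hv01 : v 1 = 0 := (mul_eq_zero.mp e1).resolve_left hd
          have hv02 : v 2 = 0 := (mul_eq_zero.mp e2).resolve_left hd
          rw [eta3 v, hv00, hv01, hv02]
          funext i
          fin_cases i <;> rfl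
        · exact key _ c2 m2
      · exact key _ c1 m1
    · exact key _ c0 m0
  -- from e₀, generate e₂ and e₁
  have hw : (![0, W^20, -W^20] : Fin 3 → RatFunc ℂ) ∈ V := by
    have heq : (![0, W^20, -W^20] : Fin 3 → RatFunc ℂ)
        = W^11 • Q3.mulVec ee0 - W^8 • ee0 := by
      rw [hB]
      funext i
      fin_cases i
      · show _ = _
        simp [ee0]
      · show _ = _
        simp [ee0]
      · show _ = _
        simp [ee0]
    rw [heq]
    exact V.sub_mem (V.smul_mem _ (hQ _ he0)) (V.smul_mem _ he0)
  have ht : (![0, 0, -W^28] : Fin 3 → RatFunc ℂ) ∈ V := by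
    have heq : (![0, 0, -W^28] : Fin 3 → RatFunc ℂ)
        = W^11 • R3.mulVec ![0, W^20, -W^20] - W^20 • ee0 := by
      rw [hA]
      funext i
      fin_cases i
      · show _ = _
        simp [ee0]
        try ring
      · show _ = _
        simp [ee0]
        try ring
      · show _ = _
        simp [ee0]
        try ring
    rw [heq]
    exact V.sub_mem (V.smul_mem _ (hR _ hw)) (V.smul_mem _ he0)
  have he2 : ee2 ∈ V := by
    have hmem := V.smul_mem (-(W^28)⁻¹) ht
    have heq : (-(W^28)⁻¹ : RatFunc ℂ) • (![0, 0, -W^28] : Fin 3 → RatFunc ℂ) = ee2 := by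
      funext i
      fin_cases i
      · show _ = _
        simp [ee2]
      · show _ = _
        simp [ee2]
      · show _ = _
        simp [ee2]
        linear_combination i28
    rwa [heq] at hmem
  have he1 : ee1 ∈ V := by
    have hm : (![0, W^20, 0] : Fin 3 → RatFunc ℂ) ∈ V := by
      have heq : (![0, W^20, 0] : Fin 3 → RatFunc ℂ)
          = ![0, W^20, -W^20] + W^20 • ee2 := by
        funext i
        fin_cases i
        · show _ = _
          simp [ee2]
        · show _ = _
          simp [ee2]
        · show _ = _
          simp [ee2]
      rw [heq]
      exact V.add_mem hw (V.smul_mem _ he2)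
    have hmem := V.smul_mem ((W^20)⁻¹) hm
    have heq : ((W^20)⁻¹ : RatFunc ℂ) • (![0, W^20, 0] : Fin 3 → RatFunc ℂ) = ee1 := by
      funext i
      fin_cases i
      · show _ = _
        simp [ee1]
      · show _ = _
        simp [ee1]
        linear_combination i20
      · show _ = _
        simp [ee1]
    rwa [heq] at hmem
  -- conclude
  rw [Submodule.eq_top_iff']
  intro x
  have hx : x = x 0 • ee0 + x 1 • ee1 + x 2 • ee2 := by
    rw [eta3 x]
    funext i
    fin_cases i
    · show _ = _
      simp [ee0, ee1, ee2]
    · show _ = _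
      simp [ee0, ee1, ee2]
    · show _ = _
      simp [ee0, ee1, ee2]
  rw [hx]
  exact V.add_mem (V.add_mem (V.smul_mem _ he0) (V.smul_mem _ he1)) (V.smul_mem _ he2)

end
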